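/- For every integer a, the operator t^{2a}(D + a) = w_{2a,1} + a·w_{2a,0} on ℂ[t,t⁻¹] belongs to the Lie subalgebra L of the ℂ-endomorphism algebra of ℂ[t,t⁻¹] generated (under commutator) by the four operators t, D³, t²(D+1) and t⁻²(D−1). (For a = 0 this says D ∈ L; for a = ±1 these are generators; the general case is the generation of the differential-degree-one part of W⁻ carried out in the proof of Lemma 2.4.) -/

import Mathlib

/-!
Write `U a = t^{2a}(D + a)`. These operators span a copy of the centreless Virasoro algebra,
`⁅U a, U b⁆ = 2(b - a) U (a + b)`, and `U 1`, `U (-1)` are generators. Their bracket gives `U 0`,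
but together with it they only span a copy of `sl₂`; `U (±2)` come from the generator `D³`:
`⁅⁅⁅D³, t⁆, U 1⁆, t⁆ = 18 U 2`, and symmetrically with `t⁻¹ = -⁅t, U (-1)⁆` for `U (-2)`.
From `U (±2)` on, bracketing with `U (±1)` has a nonzero coefficient, so it climbs to every `U n`.
-/

open LaurentPolynomial

attribute [local instance 100] LieRing.ofAssociativeRing

section LieSubalgebra

variable {K L : Type*} [Field K] [LieRing L] [LieAlgebra K L] (S : LieSubalgebra K L)

theorem LieSubalgebra.mem_of_smul_mem {c : K} (hc : c ≠ 0) {x : L} (h : c • x ∈ S) : x ∈ S :=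
  (S.toSubmodule.smul_mem_iff hc).mp h

theorem LieSubalgebra.mem_of_lie_eq_smul {c : K} (hc : c ≠ 0) {x y z : L} (hx : x ∈ S)
    (hy : y ∈ S) (h : ⁅x, y⁆ = c • z) : z ∈ S :=
  S.mem_of_smul_mem hc (h ▸ S.lie_mem hx hy)

theorem LieSubalgebra.mem_of_lie_ladder {x : L} (hx : x ∈ S) {V : ℕ → L} {c : ℕ → K}
    (hc : ∀ n, 2 ≤ n → c n ≠ 0) (hV : ∀ n, 2 ≤ n → ⁅x, V n⁆ = c n • V (n + 1))
    (h2 : V 2 ∈ S) {n : ℕ} (hn : 2 ≤ n) : V n ∈ S := by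
  induction n, hn using Nat.le_induction with
  | base => exact h2
  | succ n hn ih => exact S.mem_of_lie_eq_smul (hc n hn) hx ih (hV n hn)

theorem LieSubalgebra.mem_of_virasoro_relations [CharZero K] {U : ℤ → L}
    (hU : ∀ a b, ⁅U a, U b⁆ = (2 * (b - a) : K) • U (a + b))
    (h1 : U 1 ∈ S) (h1' : U (-1) ∈ S) (h2 : U 2 ∈ S) (h2' : U (-2) ∈ S) (a : ℤ) : U a ∈ S := by
  have h0 : U 0 ∈ S := S.mem_of_lie_eq_smul (by norm_num) h1 h1' (hU 1 (-1))
  have hc : ∀ n : ℕ, 2 ≤ n → (2 * ((n : K) - 1)) ≠ 0 := fun n hn =>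
    mul_ne_zero two_ne_zero (sub_ne_zero.mpr (by exact_mod_cast (by omega : n ≠ 1)))
  have hpos : ∀ n : ℕ, 2 ≤ n → U n ∈ S :=
    fun n => S.mem_of_lie_ladder h1 hc (V := fun n : ℕ => U n)
      (fun n _ => by simpa [add_comm] using hU 1 n) h2
  have hneg : ∀ n : ℕ, 2 ≤ n → U (-n) ∈ S :=
    fun n => S.mem_of_lie_ladder h1' (fun n hn => neg_ne_zero.mpr (hc n hn))
      (V := fun n : ℕ => U (-n))
      (fun n _ => by
        rw [hU, show -1 + -(n : ℤ) = -↑(n + 1) by push_cast; ring]; congr 1; push_cast; ring) h2'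
  obtain ⟨n, rfl | rfl⟩ := Int.eq_nat_or_neg a <;> rcases (by omega : n = 0 ∨ n = 1 ∨ 2 ≤ n)
    with rfl | rfl | hn
  all_goals simp_all

end LieSubalgebra

theorem LaurentPolynomial.linearMap_ext_T {R M : Type*} [CommSemiring R] [AddCommMonoid M]
    [Module R M] {f g : R[T;T⁻¹] →ₗ[R] M} (h : ∀ m, f (T m) = g (T m)) : f = g :=
  AddMonoidAlgebra.lhom_ext' fun m => LinearMap.ext_ring (h m)

section EulerOperators

variable (w : ℤ → ℕ → Module.End ℂ (LaurentPolynomial ℂ))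

/-- The operator `t^{2a}(D + a)`. -/
noncomputable def evenEuler (a : ℤ) : Module.End ℂ (LaurentPolynomial ℂ) :=
  w (2 * a) 1 + (a : ℂ) • w (2 * a) 0

theorem evenEuler_one : evenEuler w 1 = w 2 1 + w 2 0 := by
  simp [evenEuler]

theorem evenEuler_neg_one : evenEuler w (-1) = w (-2) 1 - w (-2) 0 := by
  rw [evenEuler]
  push_cast
  module

variable {w} (hw : ∀ (k : ℤ) (l : ℕ) (m : ℤ),
  w k l (T m) = ((m : ℂ) ^ l) • (T (m + k) : LaurentPolynomial ℂ))
include hw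

theorem evenEuler_apply_T (a m : ℤ) : evenEuler w a (T m) = ((m + a : ℂ)) • T (m + 2 * a) := by
  simp only [evenEuler, LinearMap.add_apply, LinearMap.smul_apply, hw, smul_smul]
  module

theorem lie_evenEuler (a b : ℤ) :
    ⁅evenEuler w a, evenEuler w b⁆ = (2 * (b - a) : ℂ) • evenEuler w (a + b) := by
  refine LaurentPolynomial.linearMap_ext_T fun m => ?_
  simp only [Ring.lie_def, LinearMap.sub_apply, LinearMap.smul_apply, Module.End.mul_apply,
    map_smul, evenEuler_apply_T hw, smul_smul]
  push_cast
  ring_nf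
  match_scalars
  ring

theorem lie_t_evenEuler_neg_one : ⁅w 1 0, evenEuler w (-1)⁆ = -w (-1) 0 := by
  refine LaurentPolynomial.linearMap_ext_T fun m => ?_
  simp only [Ring.lie_def, LinearMap.sub_apply, LinearMap.neg_apply, Module.End.mul_apply,
    map_smul, evenEuler_apply_T hw, hw, smul_smul]
  push_cast
  ring_nf
  match_scalars
  ring

theorem triple_lie_eq_smul_evenEuler_two :
    ⁅⁅⁅w 0 3, w 1 0⁆, evenEuler w 1⁆, w 1 0⁆ = (18 : ℂ) • evenEuler w 2 := by
  refine LaurentPolynomial.linearMap_ext_T fun m => ?_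
  simp only [Ring.lie_def, LinearMap.sub_apply, LinearMap.smul_apply, Module.End.mul_apply,
    map_smul, map_sub, evenEuler_apply_T hw, hw, smul_smul, smul_sub]
  push_cast
  ring_nf
  match_scalars
  ring

theorem triple_lie_eq_smul_evenEuler_neg_two :
    ⁅⁅⁅w 0 3, w (-1) 0⁆, evenEuler w (-1)⁆, w (-1) 0⁆ = (-18 : ℂ) • evenEuler w (-2) := by
  refine LaurentPolynomial.linearMap_ext_T fun m => ?_
  simp only [Ring.lie_def, LinearMap.sub_apply, LinearMap.smul_apply, Module.End.mul_apply,
    map_smul, map_sub, evenEuler_apply_T hw, hw, smul_smul, smul_sub]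
  push_cast
  ring_nf
  match_scalars
  ring

end EulerOperators

/-- for every integer `a`, the operator
`t^{2a}(D + a) = w_{2a,1} + a·w_{2a,0}` on `ℂ[t,t⁻¹]` belongs to the Lie subalgebra
generated by the four operators `t`, `D³`, `t²(D+1)` and `t⁻²(D−1)`. -/
theorem w_even_deg_one_mem_lieSpan
    (w : ℤ → ℕ → Module.End ℂ (LaurentPolynomial ℂ))
    (hw : ∀ (k : ℤ) (l : ℕ) (m : ℤ),
      w k l (T m) = ((m : ℂ) ^ l) • (T (m + k) : LaurentPolynomial ℂ))
    (a : ℤ) :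
    w (2 * a) 1 + (a : ℂ) • w (2 * a) 0 ∈
      LieSubalgebra.lieSpan ℂ (Module.End ℂ (LaurentPolynomial ℂ))
        {w 1 0, w 0 3, w 2 1 + w 2 0, w (-2) 1 - w (-2) 0} := by
  set S := LieSubalgebra.lieSpan ℂ (Module.End ℂ (LaurentPolynomial ℂ))
    {w 1 0, w 0 3, w 2 1 + w 2 0, w (-2) 1 - w (-2) 0}
  have ht : w 1 0 ∈ S := LieSubalgebra.subset_lieSpan (by simp)
  have hD3 : w 0 3 ∈ S := LieSubalgebra.subset_lieSpan (by simp)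
  have h1 : evenEuler w 1 ∈ S := LieSubalgebra.subset_lieSpan (by simp [evenEuler_one])
  have h1' : evenEuler w (-1) ∈ S :=
    LieSubalgebra.subset_lieSpan (by simp [evenEuler_neg_one])
  have ht' : w (-1) 0 ∈ S :=
    S.mem_of_lie_eq_smul (neg_ne_zero.mpr one_ne_zero) ht h1'
      (by rw [lie_t_evenEuler_neg_one hw, neg_one_smul])
  have h2 : evenEuler w 2 ∈ S :=
    S.mem_of_lie_eq_smul (by norm_num) (S.lie_mem (S.lie_mem hD3 ht) h1) ht
      (triple_lie_eq_smul_evenEuler_two hw)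
  have h2' : evenEuler w (-2) ∈ S :=
    S.mem_of_lie_eq_smul (by norm_num) (S.lie_mem (S.lie_mem hD3 ht') h1') ht'
      (triple_lie_eq_smul_evenEuler_neg_two hw)
  exact S.mem_of_virasoro_relations (lie_evenEuler hw) h1 h1' h2 h2' a
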